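/- For every integer l ≥ 2, one has χ_{l,l} = −Σ_{m=1}^{l} (−1)^m·m^{l−1}·Σ_{j=m}^{l} C(l,j). -/

import Mathlib

open Finset

/-- The coefficient `σ_{l,j}` from the paper (there written `σ_{l,i+1}` with `j = i+1`):
`σ_{l,j} = (-1)^{j-1} Σ_{p=0}^{j-2} (-1)^{p+1} Σ_{q=0}^{p+1} (-1)^q C(j,q)(p+1-q)^{l-1}`. -/
def sigmaCoeff (l j : ℕ) : ℚ :=
  (-1) ^ (j - 1) * ∑ p ∈ Finset.range (j - 1), (-1 : ℚ) ^ (p + 1) *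
    ∑ q ∈ Finset.range (p + 2), (-1 : ℚ) ^ q * (j.choose q : ℚ) * ((p + 1 - q : ℕ) : ℚ) ^ (l - 1)

/-- The coefficient `χ_{l,j}` from the paper (there written `χ_{l,i+1}` with `j = i+1`):
`χ_{l,j} = (-1)^{j-l} Σ_{k=1}^{j-1} ((2^{j-1}-2^{j-1-k})/(k+1)) Σ_{m=0}^{k+1} (-1)^m C(k+1,m) m^l`. -/
def chiCoeff (l j : ℕ) : ℚ :=
  (-1) ^ (j - l) * ∑ k ∈ Finset.Icc 1 (j - 1),
    ((2 ^ (j - 1) - 2 ^ (j - 1 - k) : ℚ) / ((k : ℚ) + 1)) *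
      ∑ m ∈ Finset.range (k + 2), (-1 : ℚ) ^ m * ((k + 1).choose m : ℚ) * (m : ℚ) ^ l

/-!
Absorbing `m / (k + 1)` into `C(k + 1, m)` turns the inner sums of `χ_{l,l}` into
`Σ_m (-1)^m C(k, m - 1) m^(l-1)`. After swapping the two sums, the weight of `m` is
`Σ_k (2^(l-1) - 2^(l-1-k)) C(k, m - 1) = 2^(l-1) C(l, m) - Σ_{j ≥ m} C(l, j)`: the first part is
the hockey-stick identity, the second counts the subsets of `{1, …, l}` with at least `m` elements
by the position `k + 1` of their `m`-th element. The `2^(l-1) C(l, m)` part contributes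
`2^(l-1)` times an `l`-th finite difference of `x ↦ x^(l-1)`, which vanishes.
-/

theorem sum_Icc_choose_succ_eq_two_mul_add (M n : ℕ) :
    ∑ j ∈ Icc (n + 1) (M + 1), (M + 1).choose j
      = 2 * ∑ j ∈ Icc (n + 1) M, M.choose j + M.choose n := by
  rcases lt_or_ge M n with hMn | hnM
  · rw [Icc_eq_empty_of_lt (by omega), Icc_eq_empty_of_lt (by omega),
      Nat.choose_eq_zero_of_lt hMn]
    simp
  have hshift (f : ℕ → ℕ) :
      ∑ j ∈ Icc (n + 1) (M + 1), f j = ∑ j ∈ Icc n M, f (j + 1) := by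
    rw [← map_add_right_Icc, sum_map]
    rfl
  have hbot : ∑ j ∈ Icc n M, M.choose j = M.choose n + ∑ j ∈ Icc (n + 1) M, M.choose j := by
    rw [Icc_eq_cons_Ioc hnM, sum_cons, Icc_add_one_left_eq_Ioc]
  have htop : ∑ j ∈ Icc n M, M.choose (j + 1) = ∑ j ∈ Icc (n + 1) M, M.choose j := by
    rw [← hshift, sum_Icc_succ_top (by omega), Nat.choose_succ_self, add_zero]
  simp only [hshift, Nat.choose_succ_succ', sum_add_distrib, hbot, htop]
  ring

theorem sum_range_two_pow_mul_choose (N n : ℕ) :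
    ∑ k ∈ range (N + 1), 2 ^ (N - k) * k.choose n
      = ∑ j ∈ Icc (n + 1) (N + 1), (N + 1).choose j := by
  induction N with
  | zero => cases n <;> simp
  | succ N ih =>
    rw [sum_range_succ, Nat.sub_self, pow_zero, one_mul, sum_Icc_choose_succ_eq_two_mul_add, ← ih,
      mul_sum]
    congr 1
    refine sum_congr rfl fun k hk => ?_
    rw [Nat.sub_add_comm (mem_range_succ_iff.mp hk), pow_succ]
    ring

theorem sum_range_choose_eq_choose_succ (N n : ℕ) :
    ∑ k ∈ range (N + 1), k.choose n = (N + 1).choose (n + 1) := by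
  rw [← Nat.sum_Icc_choose, range_eq_Ico, ← Ico_add_one_right_eq_Icc]
  refine (sum_subset (Ico_subset_Ico_left n.zero_le) fun k hk hkn => ?_).symm
  exact Nat.choose_eq_zero_of_lt (by simp_all)

theorem sum_range_sub_two_pow_mul_choose {R : Type*} [CommRing R] (N n : ℕ) :
    ∑ k ∈ range (N + 1), ((2 : R) ^ N - 2 ^ (N - k)) * k.choose n
      = 2 ^ N * (N + 1).choose (n + 1) - ∑ j ∈ Icc (n + 1) (N + 1), ((N + 1).choose j : R) := by
  have htail := congrArg (Nat.cast : ℕ → R) (sum_range_two_pow_mul_choose N n)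
  push_cast at htail
  simp only [sub_mul, sum_sub_distrib, ← mul_sum]
  rw [← sum_range_choose_eq_choose_succ, htail]
  push_cast
  rfl

theorem sum_range_neg_one_pow_mul_choose_mul_pow_eq_zero {R : Type*} [CommRing R] {j n : ℕ}
    (h : j < n) : ∑ m ∈ range (n + 1), (-1 : R) ^ m * n.choose m * (m : R) ^ j = 0 := by
  have hdiff := congr_fun (fwdDiff_iter_pow_eq_zero_of_lt (R := R) h) 0
  rw [fwdDiff_iter_eq_sum_shift, Pi.zero_apply] at hdiff
  calc ∑ m ∈ range (n + 1), (-1 : R) ^ m * n.choose m * (m : R) ^ j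
      = (-1) ^ n *
          ∑ m ∈ range (n + 1), ((-1 : ℤ) ^ (n - m) * n.choose m) • (0 + m • 1 : R) ^ j := by
        rw [mul_sum]
        refine sum_congr rfl fun m hm => ?_
        obtain ⟨d, rfl⟩ := Nat.exists_eq_add_of_le (mem_range_succ_iff.mp hm)
        have hsign : (-1 : R) ^ (m + d) * (-1) ^ d = (-1) ^ m := by
          rw [pow_add, mul_assoc, ← mul_pow, neg_one_mul, neg_neg, one_pow, mul_one]
        simp only [zsmul_eq_mul, nsmul_eq_mul, mul_one, zero_add, add_tsub_cancel_left]
        push_cast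
        linear_combination -(↑((m + d).choose m) * (m : R) ^ j) * hsign
    _ = 0 := by rw [hdiff, mul_zero]

theorem sum_range_neg_one_pow_mul_choose_succ_mul_pow_succ {R : Type*} [CommRing R] (k p : ℕ) :
    ∑ m ∈ range (k + 2), (-1 : R) ^ m * (k + 1).choose m * (m : R) ^ (p + 1)
      = (k + 1) * ∑ i ∈ range (k + 1), (-1 : R) ^ (i + 1) * k.choose i * ((i : R) + 1) ^ p := by
  rw [sum_range_succ', mul_sum]
  simp only [Nat.cast_zero, zero_pow p.succ_ne_zero, mul_zero, add_zero]
  refine sum_congr rfl fun i _ => ?_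
  have habsorb := congrArg (Nat.cast : ℕ → R) (Nat.add_one_mul_choose_eq k i)
  push_cast at habsorb ⊢
  linear_combination (-1 : R) ^ (i + 1) * ((i : R) + 1) ^ p * habsorb.symm

theorem sum_Icc_one_eq_sum_range {M : Type*} [AddCommMonoid M] (f : ℕ → M) (n : ℕ) :
    ∑ m ∈ Icc 1 n, f m = ∑ i ∈ range n, f (i + 1) := by
  rw [range_eq_Ico, sum_Ico_add', ← Ico_add_one_right_eq_Icc]

theorem chiCoeff_add_one_self_eq_sum_range (N : ℕ) :
    chiCoeff (N + 1) (N + 1) = ∑ k ∈ range (N + 1), ((2 : ℚ) ^ N - 2 ^ (N - k)) *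
      ∑ i ∈ range (N + 1), (-1 : ℚ) ^ (i + 1) * k.choose i * ((i : ℚ) + 1) ^ N := by
  have hterm : ∀ k ∈ Icc 1 N, ((2 ^ N - 2 ^ (N - k) : ℚ) / ((k : ℚ) + 1)) *
        ∑ m ∈ range (k + 2), (-1 : ℚ) ^ m * ((k + 1).choose m : ℚ) * (m : ℚ) ^ (N + 1)
      = ((2 : ℚ) ^ N - 2 ^ (N - k)) *
        ∑ i ∈ range (N + 1), (-1 : ℚ) ^ (i + 1) * k.choose i * ((i : ℚ) + 1) ^ N := by
    intro k hk
    rw [sum_range_neg_one_pow_mul_choose_succ_mul_pow_succ, ← mul_assoc,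
      div_mul_cancel₀ _ (by positivity)]
    congr 1
    refine sum_subset (range_subset_range.2 (Nat.succ_le_succ (mem_Icc.mp hk).2))
      fun i _ hi => ?_
    rw [Nat.choose_eq_zero_of_lt (by simpa using hi)]
    simp
  simp only [chiCoeff, Nat.sub_self, pow_zero, one_mul, Nat.add_sub_cancel]
  rw [sum_congr rfl hterm]
  refine sum_subset (fun k hk => mem_range.2 (Nat.lt_succ_of_le (mem_Icc.mp hk).2))
    fun k hk hk' => ?_
  obtain rfl : k = 0 := by
    simp only [mem_range, mem_Icc, not_and, not_le] at hk hk'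
    omega
  simp

theorem chiCoeff_add_one_self (N : ℕ) :
    chiCoeff (N + 1) (N + 1) = 2 ^ N * ∑ i ∈ range (N + 1),
        (-1 : ℚ) ^ (i + 1) * (N + 1).choose (i + 1) * ((i : ℚ) + 1) ^ N
      - ∑ i ∈ range (N + 1), (-1 : ℚ) ^ (i + 1) * ((i : ℚ) + 1) ^ N *
        ∑ j ∈ Icc (i + 1) (N + 1), ((N + 1).choose j : ℚ) := by
  rw [chiCoeff_add_one_self_eq_sum_range]
  calc _ = ∑ i ∈ range (N + 1), (-1 : ℚ) ^ (i + 1) * ((i : ℚ) + 1) ^ N *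
        ∑ k ∈ range (N + 1), ((2 : ℚ) ^ N - 2 ^ (N - k)) * k.choose i := by
        simp only [mul_sum]
        rw [sum_comm]
        exact sum_congr rfl fun i _ => sum_congr rfl fun k _ => by ring
    _ = _ := by
        simp only [sum_range_sub_two_pow_mul_choose, mul_sub, sum_sub_distrib, mul_sum]
        congr 1
        exact sum_congr rfl fun i _ => by ring

/-- Closed form for `χ_{l,l}` obtained in the proof of Lemma `sigeqchi`: for `l ≥ 2`,
`χ_{l,l} = - Σ_{m=1}^{l} (-1)^m m^{l-1} Σ_{j=m}^{l} C(l,j)`. -/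
theorem chi_ll_closed_form (l : ℕ) (hl : 2 ≤ l) :
    chiCoeff l l = - ∑ m ∈ Finset.Icc 1 l, (-1 : ℚ) ^ m * (m : ℚ) ^ (l - 1) *
      ∑ j ∈ Finset.Icc m l, (l.choose j : ℚ) := by
  obtain ⟨N, rfl⟩ : ∃ N, l = N + 1 := ⟨l - 1, by omega⟩
  have hvanish : ∑ i ∈ range (N + 1),
      (-1 : ℚ) ^ (i + 1) * (N + 1).choose (i + 1) * ((i : ℚ) + 1) ^ N = 0 := by
    have h := sum_range_neg_one_pow_mul_choose_mul_pow_eq_zero (R := ℚ) (Nat.lt_succ_self N)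
    rw [sum_range_succ'] at h
    simpa [zero_pow (by omega : N ≠ 0)] using h
  rw [chiCoeff_add_one_self, hvanish, mul_zero, zero_sub, Nat.add_sub_cancel,
    sum_Icc_one_eq_sum_range]
  push_cast
  rfl
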